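/- If ρ : ℝ≥0 → ℝ≥0 is C¹ and satisfies K⁻¹(Q+k)^q ≤ ρ(Q) + 2Q ρ'(Q) ≤ K(Q+k)^q for all Q ≥ 0, with K ≥ 1, k ≥ 0, q ≥ 0, then there exists a constant K' > 0 such that ρ(Q) ≤ K' (Q+k)^q for all Q ≥ 0. -/

import Mathlib

open Real Set

/-!
Writing `ρ + 2Qρ' = 2√Q (√Q ρ)'`, the operator `ρ ↦ ρ + 2Qρ'` is order preserving on
`[0, ∞)`: if `f + 2Qf' ≥ 0` then `√Q f` is nondecreasing and vanishes at `0`, so `f ≥ 0`.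
Since `K (Q+k)^q` has nonnegative derivative, it is a supersolution of
`ρ + 2Qρ' ≤ K (Q+k)^q`, hence dominates `ρ`.
-/

theorem hasDerivAt_sqrt_mul {f : ℝ → ℝ} {f' x : ℝ} (hf : HasDerivAt f f' x) (hx : 0 < x) :
    HasDerivAt (fun y => √y * f y) ((f x + 2 * x * f') / (2 * √x)) x := by
  refine ((hasDerivAt_sqrt hx.ne').mul hf).congr_deriv ?_
  have hs : √x ≠ 0 := (sqrt_pos.mpr hx).ne'
  field_simp
  rw [sq_sqrt hx.le]
  ring

theorem nonneg_of_add_two_mul_deriv_nonneg {f fd : ℝ → ℝ} (hf : ContinuousOn f (Ici 0))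
    (hfd : ∀ x, 0 < x → HasDerivAt f (fd x) x) (h : ∀ x, 0 < x → 0 ≤ f x + 2 * x * fd x) :
    ∀ x, 0 ≤ x → 0 ≤ f x := by
  have hmono : MonotoneOn (fun y => √y * f y) (Ici 0) := by
    refine monotoneOn_of_hasDerivWithinAt_nonneg (convex_Ici 0)
      (f' := fun x => (f x + 2 * x * fd x) / (2 * √x))
      (continuous_sqrt.continuousOn.mul hf) (fun x hx => ?_) (fun x hx => ?_)
    · rw [interior_Ici] at hx
      exact (hasDerivAt_sqrt_mul (hfd x hx) hx).hasDerivWithinAt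
    · rw [interior_Ici] at hx
      exact div_nonneg (h x hx) (by positivity)
  have hpos : ∀ x ∈ Ioi (0 : ℝ), 0 ≤ f x := fun x (hx : 0 < x) => by
    have hle : √0 * f 0 ≤ √x * f x := hmono self_mem_Ici hx.le hx.le
    rw [sqrt_zero, zero_mul] at hle
    exact nonneg_of_mul_nonneg_right hle (sqrt_pos.mpr hx)
  rw [← closure_Ioi] at hf
  exact fun x hx => le_on_closure hpos continuousOn_const hf (by rwa [closure_Ioi])

theorem hasDerivAt_add_const_rpow {k q x : ℝ} (hk : 0 ≤ k) (hx : 0 < x) :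
    HasDerivAt (fun y => (y + k) ^ q) (q * (x + k) ^ (q - 1)) x := by
  simpa using ((hasDerivAt_id x).add_const k).rpow_const (p := q) (Or.inl (by positivity))

theorem nonlinear_hodge_rho_upper_bound_general
    (ρ ρd : ℝ → ℝ) (K k q : ℝ)
    (hK : 1 ≤ K) (hk : 0 ≤ k) (hq : 0 ≤ q)
    (hderiv : ∀ Q : ℝ, 0 ≤ Q → HasDerivAt ρ (ρd Q) Q)
    (hUupp : ∀ Q : ℝ, 0 ≤ Q → ρ Q + 2 * Q * ρd Q ≤ K * (Q + k) ^ q) :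
    ∃ K' : ℝ, 0 < K' ∧ ∀ Q : ℝ, 0 ≤ Q → ρ Q ≤ K' * (Q + k) ^ q := by
  refine ⟨K, by linarith, fun Q hQ => ?_⟩
  have hcont : ContinuousOn (fun y => K * (y + k) ^ q - ρ y) (Ici 0) :=
    (((continuous_rpow_const hq).comp (continuous_add_const k)).continuousOn.const_smul K).sub
      fun x hx => (hderiv x hx).continuousAt.continuousWithinAt
  have hsuper : ∀ x, 0 < x → 0 ≤ K * (x + k) ^ q - ρ x +
      2 * x * (K * (q * (x + k) ^ (q - 1)) - ρd x) := by
    intro x hx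
    have hmono : 0 ≤ 2 * x * (K * (q * (x + k) ^ (q - 1))) := by positivity
    linarith [hUupp x hx.le]
  have hgap := nonneg_of_add_two_mul_deriv_nonneg hcont
    (fun x hx => ((hasDerivAt_add_const_rpow hk hx).const_mul K).sub (hderiv x hx.le))
    hsuper Q hQ
  linarith

/-- Under condition [U], there is `K' > 0` with
`ρ(Q) ≤ K' (Q+k)^q` for all `Q ≥ 0`. -/
theorem nonlinear_hodge_rho_upper_bound
    (ρ ρd : ℝ → ℝ) (K k q : ℝ)
    (hK : 1 ≤ K) (hk : 0 ≤ k) (hq : 0 ≤ q)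
    (hderiv : ∀ Q : ℝ, 0 ≤ Q → HasDerivAt ρ (ρd Q) Q)
    (hcont : ContinuousOn ρd (Set.Ici (0 : ℝ)))
    (hpos : ∀ Q : ℝ, 0 ≤ Q → 0 < ρ Q)
    (hUlow : ∀ Q : ℝ, 0 ≤ Q → K⁻¹ * (Q + k) ^ q ≤ ρ Q + 2 * Q * ρd Q)
    (hUupp : ∀ Q : ℝ, 0 ≤ Q → ρ Q + 2 * Q * ρd Q ≤ K * (Q + k) ^ q) :
    ∃ K' : ℝ, 0 < K' ∧ ∀ Q : ℝ, 0 ≤ Q → ρ Q ≤ K' * (Q + k) ^ q :=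
  nonlinear_hodge_rho_upper_bound_general ρ ρd K k q hK hk hq hderiv hUupp
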